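/- Let A be a perfect Heyting algebra (completely meet-irreducibles are meet-dense and completely meet-prime), let r, a ∈ A. Then the following are equivalent: (1) for all completely meet-prime m, a ∧ (r → m) ≤ m; (2) a ≤ r. -/
import Mathlib

/-- In a perfect Heyting algebra (completely meet-primes are meet-dense):
`a ⊓ (r ⇨ m) ≤ m` for all completely meet-prime `m` iff `a ≤ r`. -/
theorem alba_reflexivity_simplification {A : Type*} [Order.Frame A]
    (hmd : ∀ x : A,
      x = sInf {m : A | (∀ S : Set A, sInf S ≤ m → ∃ s ∈ S, s ≤ m) ∧ x ≤ m})
    (r a : A) :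
    (∀ m : A, (∀ S : Set A, sInf S ≤ m → ∃ s ∈ S, s ≤ m) → a ⊓ (r ⇨ m) ≤ m)
      ↔ a ≤ r := by
  constructor
  · intro h
    rw [hmd r]
    apply le_sInf
    rintro m ⟨hp, hrm⟩
    have := h m hp
    have hro : r ⇨ m = ⊤ := top_unique (le_himp_iff.2 (by simpa using hrm))
    simpa [hro] using this
  · intro h m _
    calc a ⊓ (r ⇨ m) ≤ r ⊓ (r ⇨ m) := inf_le_inf_right _ h
    _ ≤ m := by simp [inf_himp_le]
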